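/- arXiv:2001.10436 — 4 statements merged into one kernel-verified Lean document; each statement's English description precedes it below -/
import Mathlib

section
/- There exists a constant C > 0 such that for all y in ℝ^d with d ≥ 2, the integral over ℝ^d of (1+|x|)^{-d} · (1+|x-y|)^{-(d+1)} dx is at most C · (1+|y|)^{-d}. -/
/-! Since `1 + ‖y‖ ≤ (1 + ‖x‖) + (1 + ‖x - y‖)`, one of the two brackets is at least
`(1 + ‖y‖) / 2`. This yields the pointwise bound
`(1 + ‖x‖)^(-s) (1 + ‖x - y‖)^(-t) ≤ 2^t (1 + ‖y‖)^(-s) ((1 + ‖x‖)^(-t) + (1 + ‖x - y‖)^(-t))`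
for `0 ≤ s ≤ t`, and both terms on the right are integrable with the same integral as soon as
`t` exceeds the dimension. -/

open MeasureTheory Real

namespace Real

lemma rpow_neg_le_two_rpow_mul_rpow_neg {x y s : ℝ} (hx : 0 < x) (hxy : x ≤ 2 * y)
    (hs : 0 ≤ s) : y ^ (-s) ≤ 2 ^ s * x ^ (-s) := by
  have hy : 0 < y := by linarith
  calc y ^ (-s) = 2 ^ s * (2 * y) ^ (-s) := by
        rw [mul_rpow zero_le_two hy.le, rpow_neg zero_le_two, mul_inv_cancel_left₀ (by positivity)]
    _ ≤ 2 ^ s * x ^ (-s) :=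
        mul_le_mul_of_nonneg_left (rpow_le_rpow_of_nonpos hx hxy (neg_nonpos.mpr hs))
          (by positivity)

lemma rpow_neg_mul_rpow_neg_le {a b c s t : ℝ} (ha : 0 < a) (hb : 0 < b) (hc : 0 < c)
    (hcab : c ≤ a + b) (hs : 0 ≤ s) (hst : s ≤ t) :
    a ^ (-s) * b ^ (-t) ≤ 2 ^ t * c ^ (-s) * (a ^ (-t) + b ^ (-t)) := by
  rcases le_or_gt c (2 * a) with hca | hac
  · calc a ^ (-s) * b ^ (-t) ≤ (2 ^ s * c ^ (-s)) * (a ^ (-t) + b ^ (-t)) := by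
          gcongr
          · exact rpow_neg_le_two_rpow_mul_rpow_neg hc hca hs
          · exact le_add_of_nonneg_left (by positivity)
      _ ≤ 2 ^ t * c ^ (-s) * (a ^ (-t) + b ^ (-t)) := by
          gcongr ?_ * _ * _
          exact rpow_le_rpow_of_exponent_le one_le_two hst
  · -- `c ≤ 2 b` controls `b ^ (-t)`, and `a ≤ c` trades `c ^ (-(t - s))` for `a ^ (-(t - s))`.
    have hcb : c ≤ 2 * b := by linarith
    have hswap : a ^ (-s) * c ^ (-t) ≤ c ^ (-s) * a ^ (-t) := by
      have hsplit : ∀ u : ℝ, 0 < u → u ^ (-t) = u ^ (-s) * u ^ (-(t - s)) := fun u hu ↦ by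
        rw [← rpow_add hu]; ring_nf
      rw [hsplit c hc, hsplit a ha, mul_left_comm]
      gcongr c ^ (-s) * (a ^ (-s) * ?_)
      exact rpow_le_rpow_of_nonpos ha (by linarith) (by linarith)
    calc a ^ (-s) * b ^ (-t) ≤ a ^ (-s) * (2 ^ t * c ^ (-t)) := by
          gcongr
          exact rpow_neg_le_two_rpow_mul_rpow_neg hc hcb (hs.trans hst)
      _ = 2 ^ t * (a ^ (-s) * c ^ (-t)) := by ring
      _ ≤ 2 ^ t * (c ^ (-s) * a ^ (-t)) := mul_le_mul_of_nonneg_left hswap (by positivity)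
      _ ≤ 2 ^ t * c ^ (-s) * (a ^ (-t) + b ^ (-t)) := by
          rw [mul_assoc]
          gcongr
          exact le_add_of_nonneg_right (by positivity)

end Real

section JapaneseBracket

open Module

variable {E : Type*} [NormedAddCommGroup E] [NormedSpace ℝ E] [FiniteDimensional ℝ E]
  [MeasurableSpace E] [BorelSpace E] {μ : Measure E} [μ.IsAddHaarMeasure]

lemma integral_one_add_norm_rpow_neg_pos {t : ℝ} (ht : (finrank ℝ E : ℝ) < t) :
    0 < ∫ x, (1 + ‖x‖) ^ (-t) ∂μ := by
  rw [integral_pos_iff_support_of_nonneg (fun x ↦ by positivity) (integrable_one_add_norm ht)]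
  have hsupp : Function.support (fun x : E ↦ (1 + ‖x‖) ^ (-t)) = Set.univ :=
    Set.eq_univ_of_forall fun x ↦ (by positivity : (0 : ℝ) < (1 + ‖x‖) ^ (-t)).ne'
  rw [hsupp]
  exact isOpen_univ.measure_pos μ Set.univ_nonempty

lemma integral_one_add_norm_rpow_neg_mul_le {s t : ℝ} (hs : 0 ≤ s) (hst : s ≤ t)
    (ht : (finrank ℝ E : ℝ) < t) (y : E) :
    ∫ x, (1 + ‖x‖) ^ (-s) * (1 + ‖x - y‖) ^ (-t) ∂μ ≤
      2 ^ (t + 1) * (∫ x, (1 + ‖x‖) ^ (-t) ∂μ) * (1 + ‖y‖) ^ (-s) := by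
  set g : E → ℝ := fun x ↦ (1 + ‖x‖) ^ (-t)
  have hg : Integrable g μ := integrable_one_add_norm ht
  have hgy : Integrable (fun x ↦ g (x - y)) μ := hg.comp_sub_right y
  have hbound : ∀ x : E, (1 + ‖x‖) ^ (-s) * (1 + ‖x - y‖) ^ (-t) ≤
      2 ^ t * (1 + ‖y‖) ^ (-s) * (g x + g (x - y)) := fun x ↦ by
    have htri : 1 + ‖y‖ ≤ (1 + ‖x‖) + (1 + ‖x - y‖) := by
      linarith [norm_le_norm_add_norm_sub' y x, norm_sub_rev x y]
    exact rpow_neg_mul_rpow_neg_le (by positivity) (by positivity) (by positivity) htri hs hst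
  calc ∫ x, (1 + ‖x‖) ^ (-s) * (1 + ‖x - y‖) ^ (-t) ∂μ
      ≤ ∫ x, 2 ^ t * (1 + ‖y‖) ^ (-s) * (g x + g (x - y)) ∂μ :=
        integral_mono_of_nonneg (.of_forall fun x ↦ by positivity) ((hg.add hgy).const_mul _)
          (.of_forall hbound)
    _ = 2 ^ t * (1 + ‖y‖) ^ (-s) * ((∫ x, g x ∂μ) + ∫ x, g x ∂μ) := by
        rw [integral_const_mul, integral_add hg hgy, integral_sub_right_eq_self g y]
    _ = 2 ^ (t + 1) * (∫ x, g x ∂μ) * (1 + ‖y‖) ^ (-s) := by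
        rw [rpow_add_one two_ne_zero]; ring

end JapaneseBracket

theorem stmt_1_general (d : ℕ) :
    ∃ C : ℝ, 0 < C ∧ ∀ y : EuclideanSpace ℝ (Fin d),
      (∫ x : EuclideanSpace ℝ (Fin d),
          (1 + ‖x‖) ^ (-(d : ℝ)) * (1 + ‖x - y‖) ^ (-((d : ℝ) + 1)))
        ≤ C * (1 + ‖y‖) ^ (-(d : ℝ)) := by
  have hdim : (Module.finrank ℝ (EuclideanSpace ℝ (Fin d)) : ℝ) < d + 1 := by
    rw [finrank_euclideanSpace_fin]; linarith
  exact ⟨_, mul_pos (by positivity) (integral_one_add_norm_rpow_neg_pos hdim),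
    integral_one_add_norm_rpow_neg_mul_le d.cast_nonneg (by linarith) hdim⟩

theorem stmt_1 (d : ℕ) (hd : 2 ≤ d) :
    ∃ C : ℝ, 0 < C ∧ ∀ y : EuclideanSpace ℝ (Fin d),
      (∫ x : EuclideanSpace ℝ (Fin d),
          (1 + ‖x‖) ^ (-(d : ℝ)) * (1 + ‖x - y‖) ^ (-((d : ℝ) + 1)))
        ≤ C * (1 + ‖y‖) ^ (-(d : ℝ)) :=
  stmt_1_general d
end

section
/- Let d ∈ {2,3}, let A : ℝ^d → ℝ be a C¹ function such that |A(x)| ≤ C(1+|x|)^{-d} and |∇A(x)| ≤ C(1+|x|)^{-(d+1)} for all x. Then for every γ > d+1 there is a constant C' such that for all y ∈ ℝ^d, ∫_{ℝ^d} (1+|x|)^{-γ} |A(x−y) − A(−y)| dx ≤ C' (1+|y|)^{-d}. -/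
open MeasureTheory Real

/-!
Bound `|A(x - y) - A(-y)|` by `|A(x - y)| + |A(-y)|`. The second term contributes
`|A(-y)| ∫ (1 + |x|)^{-γ} ≲ (1 + |y|)^{-d}`. For the first, `|x| + |x - y| ≥ |y|` forces the larger
of `|x|`, `|x - y|` to be at least `|y| / 2`; spending the decay `(1 + ·)^{-d}` on it and the decay
`(1 + ·)^{-γ}` on the smaller one gives the pointwise bound
`(1 + |x|)^{-γ} (1 + |x - y|)^{-d} ≤ 2^d (1 + |y|)^{-d} ((1 + |x|)^{-γ} + (1 + |x - y|)^{-γ})`,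
whose right-hand side integrates to `2^{d+1} (1 + |y|)^{-d} ∫ (1 + |x|)^{-γ}`, finite as `γ > d`.
-/

section Weights

variable {p q : ℝ}

lemma one_add_rpow_neg_le_of_le (hp : 0 ≤ p) {s t : ℝ} (hs : 0 ≤ s) (hst : s ≤ t) :
    (1 + t) ^ (-p) ≤ (1 + s) ^ (-p) :=
  rpow_le_rpow_of_nonpos (by linarith) (by linarith) (by linarith)

lemma one_add_rpow_neg_le_two_rpow_mul (hp : 0 ≤ p) {s t : ℝ} (ht : 0 ≤ t) (hts : t ≤ 2 * s) :
    (1 + s) ^ (-p) ≤ 2 ^ p * (1 + t) ^ (-p) :=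
  calc (1 + s) ^ (-p) ≤ ((1 + t) * 2⁻¹) ^ (-p) :=
        rpow_le_rpow_of_nonpos (by positivity) (by linarith) (by linarith)
    _ = 2 ^ p * (1 + t) ^ (-p) := by
        rw [mul_rpow (by positivity) (by positivity), inv_rpow zero_le_two, rpow_neg zero_le_two,
          inv_inv, mul_comm]

lemma one_add_rpow_neg_mul_le_max_min (hpq : p ≤ q) {a b : ℝ} (ha : 0 ≤ a) (hb : 0 ≤ b) :
    (1 + a) ^ (-q) * (1 + b) ^ (-p) ≤ (1 + max a b) ^ (-p) * (1 + min a b) ^ (-q) := by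
  rcases le_total a b with hab | hba
  · rw [max_eq_right hab, min_eq_left hab, mul_comm]
  · rw [max_eq_left hba, min_eq_right hba]
    have hsplit : ∀ t : ℝ, 0 ≤ t → (1 + t) ^ (-q) = (1 + t) ^ (-p) * (1 + t) ^ (-(q - p)) :=
      fun t ht => by rw [← rpow_add (by linarith)]; ring_nf
    rw [hsplit a ha, hsplit b hb]
    have := one_add_rpow_neg_le_of_le (sub_nonneg.mpr hpq) hb hba
    calc (1 + a) ^ (-p) * (1 + a) ^ (-(q - p)) * (1 + b) ^ (-p)
        ≤ (1 + a) ^ (-p) * (1 + b) ^ (-(q - p)) * (1 + b) ^ (-p) := by gcongr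
      _ = (1 + a) ^ (-p) * ((1 + b) ^ (-p) * (1 + b) ^ (-(q - p))) := by ring

lemma one_add_rpow_neg_mul_le (hp : 0 ≤ p) (hpq : p ≤ q) {a b c : ℝ} (ha : 0 ≤ a) (hb : 0 ≤ b)
    (hc : 0 ≤ c) (habc : c ≤ a + b) :
    (1 + a) ^ (-q) * (1 + b) ^ (-p) ≤
      2 ^ p * (1 + c) ^ (-p) * ((1 + a) ^ (-q) + (1 + b) ^ (-q)) := by
  have hmax : (1 + max a b) ^ (-p) ≤ 2 ^ p * (1 + c) ^ (-p) :=
    one_add_rpow_neg_le_two_rpow_mul hp hc (by linarith [le_max_left a b, le_max_right a b])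
  have hmin : (1 + min a b) ^ (-q) ≤ (1 + a) ^ (-q) + (1 + b) ^ (-q) := by
    rcases min_choice a b with h | h <;> rw [h]
    · exact le_add_of_nonneg_right (rpow_nonneg (by linarith) _)
    · exact le_add_of_nonneg_left (rpow_nonneg (by linarith) _)
  calc (1 + a) ^ (-q) * (1 + b) ^ (-p)
      ≤ (1 + max a b) ^ (-p) * (1 + min a b) ^ (-q) :=
        one_add_rpow_neg_mul_le_max_min hpq ha hb
    _ ≤ 2 ^ p * (1 + c) ^ (-p) * ((1 + a) ^ (-q) + (1 + b) ^ (-q)) := by gcongr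

end Weights

lemma integral_le_of_le_mul_add_sub {G : Type*} [AddGroup G] [MeasurableSpace G] [MeasurableAdd G]
    {μ : Measure G} [μ.IsAddRightInvariant] {f g : G → ℝ} (hg : Integrable g μ) (hf : 0 ≤ f)
    {c : ℝ} (y : G) (hfg : ∀ x, f x ≤ c * (g x + g (x - y))) :
    ∫ x, f x ∂μ ≤ 2 * c * ∫ x, g x ∂μ :=
  calc ∫ x, f x ∂μ ≤ ∫ x, c * (g x + g (x - y)) ∂μ :=
        integral_mono_of_nonneg (.of_forall hf) ((hg.add (hg.comp_sub_right y)).const_mul c)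
          (.of_forall hfg)
    _ = 2 * c * ∫ x, g x ∂μ := by
        rw [integral_const_mul, integral_add hg (hg.comp_sub_right y),
          integral_sub_right_eq_self]
        ring

section Decay

variable {E : Type*} [NormedAddCommGroup E] {A : E → ℝ} {C p q : ℝ}

lemma one_add_norm_rpow_neg_mul_abs_sub_le (hp : 0 ≤ p) (hpq : p ≤ q)
    (hA : ∀ x, |A x| ≤ C * (1 + ‖x‖) ^ (-p)) (x y : E) :
    (1 + ‖x‖) ^ (-q) * |A (x - y) - A (-y)| ≤
      C * (2 ^ p + 1) * (1 + ‖y‖) ^ (-p) * ((1 + ‖x‖) ^ (-q) + (1 + ‖x - y‖) ^ (-q)) := by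
  have hC : 0 ≤ C := by simpa using (abs_nonneg _).trans (hA 0)
  have hdiff : |A (x - y) - A (-y)| ≤ C * (1 + ‖x - y‖) ^ (-p) + C * (1 + ‖y‖) ^ (-p) := by
    simpa only [norm_neg] using (abs_sub _ _).trans (add_le_add (hA (x - y)) (hA (-y)))
  have hconv := one_add_rpow_neg_mul_le hp hpq (norm_nonneg x) (norm_nonneg (x - y))
    (norm_nonneg y) (by simpa using norm_sub_le x (x - y))
  set S := (1 + ‖x‖) ^ (-q) + (1 + ‖x - y‖) ^ (-q)
  have hS : (1 + ‖x‖) ^ (-q) ≤ S := le_add_of_nonneg_right (by positivity)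
  calc (1 + ‖x‖) ^ (-q) * |A (x - y) - A (-y)|
      ≤ (1 + ‖x‖) ^ (-q) * (C * (1 + ‖x - y‖) ^ (-p) + C * (1 + ‖y‖) ^ (-p)) := by gcongr
    _ = C * ((1 + ‖x‖) ^ (-q) * (1 + ‖x - y‖) ^ (-p))
          + C * (1 + ‖y‖) ^ (-p) * (1 + ‖x‖) ^ (-q) := by ring
    _ ≤ C * (2 ^ p * (1 + ‖y‖) ^ (-p) * S) + C * (1 + ‖y‖) ^ (-p) * S := by gcongr
    _ = C * (2 ^ p + 1) * (1 + ‖y‖) ^ (-p) * S := by ring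

variable [NormedSpace ℝ E] [FiniteDimensional ℝ E] [MeasurableSpace E] [BorelSpace E]
  {μ : Measure E} [μ.IsAddHaarMeasure]

theorem integral_one_add_norm_rpow_neg_mul_abs_sub_le (hp : 0 ≤ p) (hpq : p ≤ q)
    (hq : (Module.finrank ℝ E : ℝ) < q) (hA : ∀ x, |A x| ≤ C * (1 + ‖x‖) ^ (-p)) (y : E) :
    ∫ x, (1 + ‖x‖) ^ (-q) * |A (x - y) - A (-y)| ∂μ ≤
      2 * (C * (2 ^ p + 1)) * (∫ x, (1 + ‖x‖) ^ (-q) ∂μ) * (1 + ‖y‖) ^ (-p) := by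
  have key := integral_le_of_le_mul_add_sub (integrable_one_add_norm (μ := μ) hq)
    (fun x => by positivity) y (one_add_norm_rpow_neg_mul_abs_sub_le hp hpq hA · y)
  exact key.trans_eq (by ring)

end Decay

theorem stmt_4_general (d : ℕ)
    (A : EuclideanSpace ℝ (Fin d) → ℝ)
    (C : ℝ) (hbound : ∀ x : EuclideanSpace ℝ (Fin d), |A x| ≤ C * (1 + ‖x‖) ^ (-(d : ℝ))) :
    ∀ γ : ℝ, (d : ℝ) + 1 < γ →
      ∃ C' : ℝ, 0 < C' ∧ ∀ y : EuclideanSpace ℝ (Fin d),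
        (∫ x : EuclideanSpace ℝ (Fin d), (1 + ‖x‖) ^ (-γ) * |A (x - y) - A (-y)|)
          ≤ C' * (1 + ‖y‖) ^ (-(d : ℝ)) := by
  intro γ hγ
  have hdγ : (Module.finrank ℝ (EuclideanSpace ℝ (Fin d)) : ℝ) < γ := by
    rw [finrank_euclideanSpace_fin]; linarith
  set K := 2 * (C * (2 ^ (d : ℝ) + 1)) * ∫ x : EuclideanSpace ℝ (Fin d), (1 + ‖x‖) ^ (-γ)
  refine ⟨max K 1, lt_max_of_lt_right one_pos, fun y => ?_⟩
  calc (∫ x : EuclideanSpace ℝ (Fin d), (1 + ‖x‖) ^ (-γ) * |A (x - y) - A (-y)|)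
      ≤ K * (1 + ‖y‖) ^ (-(d : ℝ)) :=
        integral_one_add_norm_rpow_neg_mul_abs_sub_le (μ := volume) (Nat.cast_nonneg d)
          (by linarith) hdγ hbound y
    _ ≤ max K 1 * (1 + ‖y‖) ^ (-(d : ℝ)) := by gcongr; exact le_max_left K 1

theorem stmt_4 (d : ℕ) (hd : d = 2 ∨ d = 3)
    (A : EuclideanSpace ℝ (Fin d) → ℝ) (hA : ContDiff ℝ 1 A)
    (C : ℝ) (hbound : ∀ x : EuclideanSpace ℝ (Fin d), |A x| ≤ C * (1 + ‖x‖) ^ (-(d : ℝ)))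
    (hgrad : ∀ x : EuclideanSpace ℝ (Fin d), ‖fderiv ℝ A x‖ ≤ C * (1 + ‖x‖) ^ (-((d : ℝ) + 1))) :
    ∀ γ : ℝ, (d : ℝ) + 1 < γ →
      ∃ C' : ℝ, 0 < C' ∧ ∀ y : EuclideanSpace ℝ (Fin d),
        (∫ x : EuclideanSpace ℝ (Fin d), (1 + ‖x‖) ^ (-γ) * |A (x - y) - A (-y)|)
          ≤ C' * (1 + ‖y‖) ^ (-(d : ℝ)) :=
  stmt_4_general d A C hbound
end

section
/- Let 1 ≤ p < ∞ and 0 < γ < δ. For every f ∈ B^p_γ and every A > 1, setting R = A^{p/δ}, the decomposition f = f·1_{|x|≤R} + f·1_{|x|>R} satisfies ‖f·1_{|x|≤R}‖_{L^p} ≤ C A^{γ/δ} ‖f‖_{B^p_γ} and ‖f·1_{|x|>R}‖_{L^p_{w_δ}} ≤ C A^{γ/δ − 1} ‖f‖_{B^p_γ}, for a constant C depending only on p, γ, δ, d. -/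
open MeasureTheory Real Filter

noncomputable section

/-!
On the ball of radius `R` the bound is the growth hypothesis itself. Outside it, cut the space
into the dyadic annuli `R 2^k ≤ ‖x‖ < R 2^(k+1)`: on the `k`-th one the weight is at most
`(R 2^k)^(-δ)` and the mass of `|f|^p` at most `M^p (R 2^(k+1))^γ`, so the annuli contribute a
geometric series of ratio `2^(γ-δ) < 1` and total `≲ M^p R^(γ-δ)`. With `R = A^(p/δ)` one has
`R^γ = (A^(γ/δ))^p` and `R^(γ-δ) = (A^(γ/δ-1))^p`.
-/

open scoped ENNReal

lemma rpow_div_rpow_comm {A : ℝ} (hA : 0 ≤ A) (p s δ : ℝ) :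
    (A ^ (p / δ)) ^ s = (A ^ (s / δ)) ^ p := by
  rw [← rpow_mul hA, ← rpow_mul hA]
  ring_nf

lemma mul_two_pow_succ_rpow_mul_mul_two_pow_rpow_neg {R : ℝ} (hR : 0 < R) (γ δ : ℝ) (k : ℕ) :
    (R * 2 ^ (k + 1)) ^ γ * (R * 2 ^ k) ^ (-δ) = (2 ^ (γ - δ)) ^ k * (2 ^ γ * R ^ (γ - δ)) := by
  rw [mul_rpow hR.le (by positivity), mul_rpow hR.le (by positivity), ← rpow_pow_comm zero_le_two,
    ← rpow_pow_comm zero_le_two, sub_eq_add_neg, rpow_add hR, rpow_add two_pos, mul_pow]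
  ring

section DyadicAnnuli

variable {E : Type*} [NormedAddCommGroup E]

def dyadicAnnulus (R : ℝ) (k : ℕ) : Set E := {x | R * 2 ^ k ≤ ‖x‖ ∧ ‖x‖ < R * 2 ^ (k + 1)}

lemma setOf_lt_norm_subset_iUnion_dyadicAnnulus {R : ℝ} (hR : 0 < R) :
    {x : E | R < ‖x‖} ⊆ ⋃ k, dyadicAnnulus R k := by
  intro x hx
  obtain ⟨k, hk_le, hk_lt⟩ := exists_nat_pow_near ((one_le_div hR).2 hx.le) one_lt_two
  exact Set.mem_iUnion.2 ⟨k, by rwa [le_div_iff₀' hR] at hk_le, by rwa [div_lt_iff₀' hR] at hk_lt⟩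

lemma dyadicAnnulus_subset_ball (R : ℝ) (k : ℕ) :
    dyadicAnnulus R k ⊆ Metric.ball (0 : E) (R * 2 ^ (k + 1)) :=
  fun _ hx => mem_ball_zero_iff.2 hx.2

variable [MeasurableSpace E] [OpensMeasurableSpace E] {μ : Measure E}

lemma measurableSet_dyadicAnnulus (R : ℝ) (k : ℕ) : MeasurableSet (dyadicAnnulus R k : Set E) :=
  (measurableSet_le measurable_const measurable_norm).inter
    (measurableSet_lt measurable_norm measurable_const)

variable {g : E → ℝ≥0∞} {c γ δ R : ℝ}

lemma lintegral_dyadicAnnulus_mul_weight_le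
    (hg : ∀ r, 1 ≤ r → ∫⁻ x in Metric.ball 0 r, g x ∂μ ≤ ENNReal.ofReal (c * r ^ γ))
    (hδ : 0 ≤ δ) (hR : 1 ≤ R) (k : ℕ) :
    ∫⁻ x in dyadicAnnulus R k, g x * ENNReal.ofReal ((1 + ‖x‖) ^ (-δ)) ∂μ ≤
      ENNReal.ofReal (2 ^ (γ - δ)) ^ k * ENNReal.ofReal (c * (2 ^ γ * R ^ (γ - δ))) := by
  have hR0 : 0 < R := one_pos.trans_le hR
  have hinner : 0 < R * 2 ^ k := by positivity
  have hball : ∫⁻ x in dyadicAnnulus R k, g x ∂μ ≤ ENNReal.ofReal (c * (R * 2 ^ (k + 1)) ^ γ) :=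
    (lintegral_mono_set (dyadicAnnulus_subset_ball R k)).trans
      (hg _ (one_le_mul_of_one_le_of_one_le hR (one_le_pow₀ one_le_two)))
  calc ∫⁻ x in dyadicAnnulus R k, g x * ENNReal.ofReal ((1 + ‖x‖) ^ (-δ)) ∂μ
      ≤ ∫⁻ x in dyadicAnnulus R k, g x * ENNReal.ofReal ((R * 2 ^ k) ^ (-δ)) ∂μ := by
        refine setLIntegral_mono' (measurableSet_dyadicAnnulus R k) fun x hx => ?_
        have hx_le : R * 2 ^ k ≤ 1 + ‖x‖ := by linarith [hx.1]
        exact mul_le_mul_right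
          (ENNReal.ofReal_le_ofReal (rpow_le_rpow_of_nonpos hinner hx_le (neg_nonpos.2 hδ))) _
    _ = (∫⁻ x in dyadicAnnulus R k, g x ∂μ) * ENNReal.ofReal ((R * 2 ^ k) ^ (-δ)) :=
        lintegral_mul_const' _ _ ENNReal.ofReal_ne_top
    _ ≤ ENNReal.ofReal (c * (R * 2 ^ (k + 1)) ^ γ) * ENNReal.ofReal ((R * 2 ^ k) ^ (-δ)) := by
        gcongr
    _ = ENNReal.ofReal (2 ^ (γ - δ)) ^ k * ENNReal.ofReal (c * (2 ^ γ * R ^ (γ - δ))) := by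
        rw [← ENNReal.ofReal_mul' (by positivity), ← ENNReal.ofReal_pow (by positivity),
          ← ENNReal.ofReal_mul (by positivity), mul_assoc,
          mul_two_pow_succ_rpow_mul_mul_two_pow_rpow_neg hR0]
        ring_nf

lemma lintegral_lt_norm_mul_weight_le
    (hg : ∀ r, 1 ≤ r → ∫⁻ x in Metric.ball 0 r, g x ∂μ ≤ ENNReal.ofReal (c * r ^ γ))
    (hγδ : γ < δ) (hδ : 0 ≤ δ) (hR : 1 ≤ R) :
    ∫⁻ x in {x | R < ‖x‖}, g x * ENNReal.ofReal ((1 + ‖x‖) ^ (-δ)) ∂μ ≤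
      ENNReal.ofReal ((1 - 2 ^ (γ - δ))⁻¹ * (c * (2 ^ γ * R ^ (γ - δ)))) := by
  have hratio : (2 : ℝ) ^ (γ - δ) < 1 := rpow_lt_one_of_one_lt_of_neg one_lt_two (sub_neg.2 hγδ)
  calc ∫⁻ x in {x | R < ‖x‖}, g x * ENNReal.ofReal ((1 + ‖x‖) ^ (-δ)) ∂μ
      ≤ ∫⁻ x in ⋃ k, dyadicAnnulus R k, g x * ENNReal.ofReal ((1 + ‖x‖) ^ (-δ)) ∂μ :=
        lintegral_mono_set (setOf_lt_norm_subset_iUnion_dyadicAnnulus (one_pos.trans_le hR))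
    _ ≤ ∑' k, ∫⁻ x in dyadicAnnulus R k, g x * ENNReal.ofReal ((1 + ‖x‖) ^ (-δ)) ∂μ :=
        lintegral_iUnion_le _ _
    _ ≤ ∑' k : ℕ, ENNReal.ofReal (2 ^ (γ - δ)) ^ k * ENNReal.ofReal (c * (2 ^ γ * R ^ (γ - δ))) :=
        ENNReal.tsum_le_tsum (lintegral_dyadicAnnulus_mul_weight_le hg hδ hR)
    _ = ENNReal.ofReal ((1 - 2 ^ (γ - δ))⁻¹ * (c * (2 ^ γ * R ^ (γ - δ)))) := by
        rw [ENNReal.tsum_mul_right, ENNReal.tsum_geometric,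
          ENNReal.ofReal_mul (inv_nonneg.2 (sub_nonneg.2 hratio.le)),
          ENNReal.ofReal_inv_of_pos (sub_pos.2 hratio), ENNReal.ofReal_sub _ (by positivity),
          ENNReal.ofReal_one]

end DyadicAnnuli

theorem stmt_9 (d : ℕ) (p γ δ : ℝ) (hp : 1 ≤ p) (hγ : 0 < γ) (hδ : γ < δ) :
    ∃ C : ℝ, 0 < C ∧
      ∀ f : EuclideanSpace ℝ (Fin d) → ℝ, Measurable f →
      ∀ M : ℝ, 0 ≤ M →
      (∀ R : ℝ, 1 ≤ R →
        (∫⁻ x in Metric.ball (0 : EuclideanSpace ℝ (Fin d)) R, ENNReal.ofReal (|f x| ^ p))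
          ≤ ENNReal.ofReal (M ^ p * R ^ γ)) →
      ∀ A : ℝ, 1 < A →
        (∫⁻ x in Metric.ball (0 : EuclideanSpace ℝ (Fin d)) (A ^ (p / δ)),
            ENNReal.ofReal (|f x| ^ p))
          ≤ ENNReal.ofReal ((C * A ^ (γ / δ) * M) ^ p) ∧
        (∫⁻ x in {x : EuclideanSpace ℝ (Fin d) | A ^ (p / δ) < ‖x‖},
            ENNReal.ofReal (|f x| ^ p * (1 + ‖x‖) ^ (-δ)))
          ≤ ENNReal.ofReal ((C * A ^ (γ / δ - 1) * M) ^ p) := by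
  have hδ0 : 0 < δ := hγ.trans hδ
  have hp0 : 0 < p := one_pos.trans_le hp
  have hratio : (2 : ℝ) ^ (γ - δ) < 1 := rpow_lt_one_of_one_lt_of_neg one_lt_two (sub_neg.2 hδ)
  set K : ℝ := (1 - 2 ^ (γ - δ))⁻¹ * 2 ^ γ
  have hK : 1 ≤ K := one_le_mul_of_one_le_of_one_le
    (one_le_inv₀ (sub_pos.2 hratio) |>.2 (by linarith [rpow_pos_of_pos two_pos (γ - δ)]))
    (one_le_rpow one_le_two hγ.le)
  have hC_pow : ∀ X Y, 0 ≤ X → 0 ≤ Y → (K ^ p⁻¹ * X * Y) ^ p = K * X ^ p * Y ^ p :=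
    fun X Y hX hY => by
      rw [mul_rpow (by positivity) hY, mul_rpow (by positivity) hX, ← rpow_mul (by positivity),
        inv_mul_cancel₀ hp0.ne', rpow_one]
  refine ⟨K ^ p⁻¹, rpow_pos_of_pos (by linarith) _, fun f _ M hM hB A hA => ?_⟩
  have hR : 1 ≤ A ^ (p / δ) := one_le_rpow hA.le (by positivity)
  constructor
  · refine (hB _ hR).trans (ENNReal.ofReal_le_ofReal ?_)
    rw [hC_pow _ _ (by positivity) hM, rpow_div_rpow_comm (by positivity), mul_assoc,
      mul_comm (M ^ p)]
    exact le_mul_of_one_le_left (by positivity) hK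
  · simp_rw [ENNReal.ofReal_mul (rpow_nonneg (abs_nonneg _) p)]
    refine (lintegral_lt_norm_mul_weight_le hB hδ hδ0.le hR).trans_eq (congrArg _ ?_)
    rw [hC_pow _ _ (by positivity) hM, rpow_div_rpow_comm (by positivity), sub_div,
      div_self hδ0.ne']
    ring
end
end

section
/- Let 1 ≤ p < ∞ and 0 < γ < δ. Suppose f ∈ L^p_loc(ℝ^d) and there is c > 0 such that for every A > 0 one can write f = f₀ + f₁ with ‖f₀‖_{L^p} ≤ c A^{γ/δ} and ‖f₁‖_{L^p_{w_δ}} ≤ c A^{γ/δ − 1}. Then f ∈ B^p_γ, i.e., sup_{R ≥ 1} R^{-γ} ∫_{B(0,R)} |f|^p dx < ∞. -/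
/-! At scale `R ≥ 1` split `f` with `A = R ^ (δ / p)`. Then `∫ |f₀|^p ≤ c^p R^γ`, while on the
ball `B(0, R)` the weight `(1 + |x|)^(-δ)` is at least `(2R)^(-δ)`, so
`∫_B |f₁|^p ≤ (2R)^δ c^p R^(γ-δ) = 2^δ c^p R^γ`. The pointwise bound
`|a + b|^p ≤ 2^(p-1) (|a|^p + |b|^p)` combines the two into `∫_B |f|^p ≤ M R^γ`. -/

open MeasureTheory Real

theorem ENNReal.ofReal_abs_add_rpow_le {p : ℝ} (hp : 1 ≤ p) (a b : ℝ) :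
    ENNReal.ofReal (|a + b| ^ p)
      ≤ 2 ^ (p - 1) * (ENNReal.ofReal (|a| ^ p) + ENNReal.ofReal (|b| ^ p)) := by
  have hp0 : 0 ≤ p := zero_le_one.trans hp
  simp only [← ENNReal.ofReal_rpow_of_nonneg (abs_nonneg _) hp0]
  calc ENNReal.ofReal |a + b| ^ p ≤ (ENNReal.ofReal |a| + ENNReal.ofReal |b|) ^ p := by
        gcongr
        rw [← ENNReal.ofReal_add (abs_nonneg _) (abs_nonneg _)]
        exact ENNReal.ofReal_le_ofReal (abs_add_le a b)
    _ ≤ _ := ENNReal.rpow_add_le_mul_rpow_add_rpow _ _ hp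

theorem lintegral_ofReal_abs_add_rpow_le {α : Type*} [MeasurableSpace α] {μ : Measure α}
    {p : ℝ} (hp : 1 ≤ p) {g : α → ℝ} (hg : Measurable g) (h : α → ℝ) :
    ∫⁻ x, ENNReal.ofReal (|g x + h x| ^ p) ∂μ
      ≤ 2 ^ (p - 1) * (∫⁻ x, ENNReal.ofReal (|g x| ^ p) ∂μ
        + ∫⁻ x, ENNReal.ofReal (|h x| ^ p) ∂μ) := by
  have hpow : (2 : ENNReal) ^ (p - 1) ≠ ⊤ :=
    ENNReal.rpow_ne_top_of_nonneg (sub_nonneg.2 hp) ENNReal.ofNat_ne_top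
  calc ∫⁻ x, ENNReal.ofReal (|g x + h x| ^ p) ∂μ
      ≤ ∫⁻ x, 2 ^ (p - 1) * (ENNReal.ofReal (|g x| ^ p) + ENNReal.ofReal (|h x| ^ p)) ∂μ :=
        lintegral_mono fun x => ENNReal.ofReal_abs_add_rpow_le hp (g x) (h x)
    _ = _ := by
      rw [lintegral_const_mul' _ _ hpow, lintegral_add_left (by fun_prop)]

theorem setLIntegral_ball_le_mul_lintegral_weighted {E : Type*} [NormedAddCommGroup E]
    [MeasurableSpace E] [OpensMeasurableSpace E] {μ : Measure E} {δ : ℝ} (hδ : 0 ≤ δ)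
    (g : E → ℝ) (p R : ℝ) :
    ∫⁻ x in Metric.ball 0 R, ENNReal.ofReal (|g x| ^ p) ∂μ
      ≤ ENNReal.ofReal ((1 + R) ^ δ)
        * ∫⁻ x, ENNReal.ofReal (|g x| ^ p * (1 + ‖x‖) ^ (-δ)) ∂μ := by
  have hpoint : ∀ x ∈ Metric.ball (0 : E) R, ENNReal.ofReal (|g x| ^ p)
      ≤ ENNReal.ofReal ((1 + R) ^ δ) * ENNReal.ofReal (|g x| ^ p * (1 + ‖x‖) ^ (-δ)) := by
    intro x hx
    have hxR : ‖x‖ < R := mem_ball_zero_iff.1 hx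
    have hx0 : 0 < 1 + ‖x‖ := by positivity
    rw [← ENNReal.ofReal_mul' (by positivity)]
    refine ENNReal.ofReal_le_ofReal ?_
    calc |g x| ^ p = |g x| ^ p * (1 + ‖x‖) ^ (-δ) * (1 + ‖x‖) ^ δ := by
          rw [mul_assoc, ← rpow_add hx0, neg_add_cancel, rpow_zero, mul_one]
      _ ≤ |g x| ^ p * (1 + ‖x‖) ^ (-δ) * (1 + R) ^ δ := by gcongr
      _ = _ := mul_comm _ _
  calc ∫⁻ x in Metric.ball 0 R, ENNReal.ofReal (|g x| ^ p) ∂μ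
      ≤ ∫⁻ x in Metric.ball 0 R, ENNReal.ofReal ((1 + R) ^ δ)
          * ENNReal.ofReal (|g x| ^ p * (1 + ‖x‖) ^ (-δ)) ∂μ :=
        setLIntegral_mono' Metric.isOpen_ball.measurableSet hpoint
    _ ≤ _ := by
      rw [lintegral_const_mul' _ _ ENNReal.ofReal_ne_top]
      gcongr
      exact Measure.restrict_le_self

theorem mul_rpow_div_rpow_rpow {c R : ℝ} (hc : 0 ≤ c) (hR : 0 ≤ R) {p : ℝ} (hp : p ≠ 0)
    (δ e : ℝ) : (c * (R ^ (δ / p)) ^ e) ^ p = c ^ p * R ^ (δ * e) := by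
  rw [← rpow_mul hR, mul_rpow hc (rpow_nonneg hR _), ← rpow_mul hR,
    show δ / p * e * p = δ * e by field_simp]

theorem one_add_rpow_mul_rpow_sub_le {R : ℝ} (hR : 1 ≤ R) {δ : ℝ} (hδ : 0 ≤ δ) (γ : ℝ) :
    (1 + R) ^ δ * R ^ (γ - δ) ≤ 2 ^ δ * R ^ γ := by
  have hR0 : 0 < R := zero_lt_one.trans_le hR
  calc (1 + R) ^ δ * R ^ (γ - δ) ≤ (2 * R) ^ δ * R ^ (γ - δ) := by gcongr; linarith
    _ = 2 ^ δ * R ^ γ := by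
      rw [mul_rpow zero_le_two hR0.le, mul_assoc, ← rpow_add hR0, add_sub_cancel]

theorem setLIntegral_ball_le_of_lintegral_weighted_le {E : Type*} [NormedAddCommGroup E]
    [MeasurableSpace E] [OpensMeasurableSpace E] {μ : Measure E} {g : E → ℝ} {p γ δ C R : ℝ}
    (hδ : 0 ≤ δ) (hC : 0 ≤ C) (hR : 1 ≤ R)
    (h : ∫⁻ x, ENNReal.ofReal (|g x| ^ p * (1 + ‖x‖) ^ (-δ)) ∂μ
      ≤ ENNReal.ofReal (C * R ^ (γ - δ))) :
    ∫⁻ x in Metric.ball 0 R, ENNReal.ofReal (|g x| ^ p) ∂μ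
      ≤ ENNReal.ofReal (2 ^ δ * C * R ^ γ) := by
  refine (setLIntegral_ball_le_mul_lintegral_weighted hδ g p R).trans ?_
  calc ENNReal.ofReal ((1 + R) ^ δ) * _
      ≤ ENNReal.ofReal ((1 + R) ^ δ) * ENNReal.ofReal (C * R ^ (γ - δ)) := by gcongr
    _ = ENNReal.ofReal (C * ((1 + R) ^ δ * R ^ (γ - δ))) := by
      rw [← ENNReal.ofReal_mul (by positivity)]; ring_nf
    _ ≤ _ := by
      refine ENNReal.ofReal_le_ofReal ?_
      have := one_add_rpow_mul_rpow_sub_le hR hδ γ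
      nlinarith

theorem stmt_10_general (d : ℕ) (p γ δ : ℝ) (hp : 1 ≤ p) (hγ : 0 < γ) (hδ : γ < δ)
    (f : EuclideanSpace ℝ (Fin d) → ℝ)
    (c : ℝ) (hc : 0 < c)
    (hdecomp : ∀ A : ℝ, 0 < A → ∃ f₀ f₁ : EuclideanSpace ℝ (Fin d) → ℝ,
      Measurable f₀ ∧ Measurable f₁ ∧ (∀ x, f x = f₀ x + f₁ x) ∧
      (∫⁻ x : EuclideanSpace ℝ (Fin d), ENNReal.ofReal (|f₀ x| ^ p))
        ≤ ENNReal.ofReal ((c * A ^ (γ / δ)) ^ p) ∧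
      (∫⁻ x : EuclideanSpace ℝ (Fin d), ENNReal.ofReal (|f₁ x| ^ p * (1 + ‖x‖) ^ (-δ)))
        ≤ ENNReal.ofReal ((c * A ^ (γ / δ - 1)) ^ p)) :
    ∃ M : ℝ, ∀ R : ℝ, 1 ≤ R →
      (∫⁻ x in Metric.ball (0 : EuclideanSpace ℝ (Fin d)) R, ENNReal.ofReal (|f x| ^ p))
        ≤ ENNReal.ofReal (M * R ^ γ) := by
  refine ⟨2 ^ (p - 1) * c ^ p * (1 + 2 ^ δ), fun R hR => ?_⟩
  have hR0 : 0 < R := zero_lt_one.trans_le hR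
  have hp0 : 0 < p := zero_lt_one.trans_le hp
  have hδ0 : 0 < δ := hγ.trans hδ
  obtain ⟨f₀, f₁, hf₀, -, hf, h₀, h₁⟩ := hdecomp (R ^ (δ / p)) (rpow_pos_of_pos hR0 _)
  rw [mul_rpow_div_rpow_rpow hc.le hR0.le hp0.ne', mul_div_cancel₀ _ hδ0.ne'] at h₀
  rw [mul_rpow_div_rpow_rpow hc.le hR0.le hp0.ne', mul_sub_one,
    mul_div_cancel₀ _ hδ0.ne'] at h₁
  have hB₀ : ∫⁻ x in Metric.ball 0 R, ENNReal.ofReal (|f₀ x| ^ p)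
      ≤ ENNReal.ofReal (c ^ p * R ^ γ) := (setLIntegral_le_lintegral _ _).trans h₀
  have hB₁ : ∫⁻ x in Metric.ball 0 R, ENNReal.ofReal (|f₁ x| ^ p)
      ≤ ENNReal.ofReal (2 ^ δ * c ^ p * R ^ γ) :=
    setLIntegral_ball_le_of_lintegral_weighted_le hδ0.le (by positivity) hR h₁
  simp_rw [hf]
  calc _ ≤ 2 ^ (p - 1) * ((∫⁻ x in Metric.ball 0 R, ENNReal.ofReal (|f₀ x| ^ p))
          + ∫⁻ x in Metric.ball 0 R, ENNReal.ofReal (|f₁ x| ^ p)) :=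
        lintegral_ofReal_abs_add_rpow_le hp hf₀ f₁
    _ ≤ 2 ^ (p - 1)
          * (ENNReal.ofReal (c ^ p * R ^ γ) + ENNReal.ofReal (2 ^ δ * c ^ p * R ^ γ)) := by
        gcongr
    _ = _ := by
      rw [← ENNReal.ofReal_add (by positivity) (by positivity), ← ENNReal.ofReal_ofNat,
        ENNReal.ofReal_rpow_of_pos two_pos, ← ENNReal.ofReal_mul (by positivity)]
      ring_nf

theorem stmt_10 (d : ℕ) (p γ δ : ℝ) (hp : 1 ≤ p) (hγ : 0 < γ) (hδ : γ < δ)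
    (f : EuclideanSpace ℝ (Fin d) → ℝ) (hmeas : Measurable f)
    (c : ℝ) (hc : 0 < c)
    (hdecomp : ∀ A : ℝ, 0 < A → ∃ f₀ f₁ : EuclideanSpace ℝ (Fin d) → ℝ,
      Measurable f₀ ∧ Measurable f₁ ∧ (∀ x, f x = f₀ x + f₁ x) ∧
      (∫⁻ x : EuclideanSpace ℝ (Fin d), ENNReal.ofReal (|f₀ x| ^ p))
        ≤ ENNReal.ofReal ((c * A ^ (γ / δ)) ^ p) ∧
      (∫⁻ x : EuclideanSpace ℝ (Fin d), ENNReal.ofReal (|f₁ x| ^ p * (1 + ‖x‖) ^ (-δ)))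
        ≤ ENNReal.ofReal ((c * A ^ (γ / δ - 1)) ^ p)) :
    ∃ M : ℝ, ∀ R : ℝ, 1 ≤ R →
      (∫⁻ x in Metric.ball (0 : EuclideanSpace ℝ (Fin d)) R, ENNReal.ofReal (|f x| ^ p))
        ≤ ENNReal.ofReal (M * R ^ γ) :=
  stmt_10_general d p γ δ hp hγ hδ f c hc hdecomp
end
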